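/- For every formula φ of the fragment μLTL and every infinite word w over 2^Ap: w ⊨ GFφ if and only if for every index i there exists an index j ≥ i such that af(Fφ, w_{ij}) ≡_P tt. -/
import Mathlib


/-- LTL formulas in negation normal form over atomic propositions `Ap`. -/
inductive LTL (Ap : Type) : Type
  | tt : LTL Ap
  | ff : LTL Ap
  | atom (a : Ap) : LTL Ap
  | natom (a : Ap) : LTL Ap
  | conj (φ ψ : LTL Ap) : LTL Ap
  | disj (φ ψ : LTL Ap) : LTL Ap
  | next (φ : LTL Ap) : LTL Ap
  | fut (φ : LTL Ap) : LTL Ap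
  | glob (φ : LTL Ap) : LTL Ap
  | untl (φ ψ : LTL Ap) : LTL Ap
  | wUntl (φ ψ : LTL Ap) : LTL Ap
  | strongRel (φ ψ : LTL Ap) : LTL Ap
  | rel (φ ψ : LTL Ap) : LTL Ap

variable {Ap : Type} [DecidableEq Ap]

/-- The suffix `w_i` of an infinite word. -/
def suffix (w : ℕ → Finset Ap) (i : ℕ) : ℕ → Finset Ap := fun k => w (i + k)

/-- Standard LTL satisfaction over infinite words over `2^Ap`. -/
def Sat : (ℕ → Finset Ap) → LTL Ap → Prop
  | _, .tt => True
  | _, .ff => False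
  | w, .atom a => a ∈ w 0
  | w, .natom a => a ∉ w 0
  | w, .conj φ ψ => Sat w φ ∧ Sat w ψ
  | w, .disj φ ψ => Sat w φ ∨ Sat w ψ
  | w, .next φ => Sat (suffix w 1) φ
  | w, .fut φ => ∃ k, Sat (suffix w k) φ
  | w, .glob φ => ∀ k, Sat (suffix w k) φ
  | w, .untl φ ψ => ∃ k, Sat (suffix w k) ψ ∧ ∀ j < k, Sat (suffix w j) φ
  | w, .wUntl φ ψ =>
      (∀ k, Sat (suffix w k) φ) ∨ (∃ k, Sat (suffix w k) ψ ∧ ∀ j < k, Sat (suffix w j) φ)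
  | w, .strongRel φ ψ => ∃ k, Sat (suffix w k) φ ∧ ∀ j ≤ k, Sat (suffix w j) ψ
  | w, .rel φ ψ =>
      (∀ k, Sat (suffix w k) ψ) ∨ (∃ k, Sat (suffix w k) φ ∧ ∀ j ≤ k, Sat (suffix w j) ψ)

/-- The "after" function on a single letter `ν ∈ 2^Ap`. -/
def afLetter : LTL Ap → Finset Ap → LTL Ap
  | .tt, _ => .tt
  | .ff, _ => .ff
  | .atom a, ν => if a ∈ ν then .tt else .ff
  | .natom a, ν => if a ∈ ν then .ff else .tt
  | .conj φ ψ, ν => .conj (afLetter φ ν) (afLetter ψ ν)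
  | .disj φ ψ, ν => .disj (afLetter φ ν) (afLetter ψ ν)
  | .next φ, _ => φ
  | .fut φ, ν => .disj (afLetter φ ν) (.fut φ)
  | .glob φ, ν => .conj (afLetter φ ν) (.glob φ)
  | .untl φ ψ, ν => .disj (afLetter ψ ν) (.conj (afLetter φ ν) (.untl φ ψ))
  | .wUntl φ ψ, ν => .disj (afLetter ψ ν) (.conj (afLetter φ ν) (.wUntl φ ψ))
  | .strongRel φ ψ, ν => .conj (afLetter ψ ν) (.disj (afLetter φ ν) (.strongRel φ ψ))
  | .rel φ ψ, ν => .conj (afLetter ψ ν) (.disj (afLetter φ ν) (.rel φ ψ))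

/-- The "after" function extended to finite words. -/
def af : LTL Ap → List (Finset Ap) → LTL Ap
  | φ, [] => φ
  | φ, ν :: u => af (afLetter φ ν) u

/-- The finite prefix `w_{0i} = w[0]⋯w[i-1]` of an infinite word. -/
def prefixWord (w : ℕ → Finset Ap) (i : ℕ) : List (Finset Ap) :=
  (List.range i).map w

/-- The finite infix `w_{ij} = w[i]⋯w[j-1]` of an infinite word. -/
def infixWord (w : ℕ → Finset Ap) (i j : ℕ) : List (Finset Ap) :=
  (List.range (j - i)).map (fun k => w (i + k))

/-- Evaluation of a formula as a propositional formula, where every maximal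
proper subformula (root not `∧`/`∨`) is treated as a propositional variable
whose truth value is given by the assignment `v`. -/
def propEval (v : LTL Ap → Prop) : LTL Ap → Prop
  | .tt => True
  | .ff => False
  | .conj φ ψ => propEval v φ ∧ propEval v ψ
  | .disj φ ψ => propEval v φ ∨ propEval v ψ
  | φ => v φ

/-- Propositional equivalence `φ ≡_P ψ`. -/
def propEquiv (φ ψ : LTL Ap) : Prop := ∀ v, propEval v φ ↔ propEval v ψ

/-- The set of subformulas of a formula (including itself). -/
def subf : LTL Ap → Set (LTL Ap)
  | .tt => {LTL.tt}
  | .ff => {LTL.ff}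
  | .atom a => {LTL.atom a}
  | .natom a => {LTL.natom a}
  | .conj φ ψ => insert (.conj φ ψ) (subf φ ∪ subf ψ)
  | .disj φ ψ => insert (.disj φ ψ) (subf φ ∪ subf ψ)
  | .next φ => insert (.next φ) (subf φ)
  | .fut φ => insert (.fut φ) (subf φ)
  | .glob φ => insert (.glob φ) (subf φ)
  | .untl φ ψ => insert (.untl φ ψ) (subf φ ∪ subf ψ)
  | .wUntl φ ψ => insert (.wUntl φ ψ) (subf φ ∪ subf ψ)
  | .strongRel φ ψ => insert (.strongRel φ ψ) (subf φ ∪ subf ψ)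
  | .rel φ ψ => insert (.rel φ ψ) (subf φ ∪ subf ψ)

/-- A formula is proper if its root is not a conjunction or a disjunction. -/
def isProper : LTL Ap → Prop
  | .conj _ _ => False
  | .disj _ _ => False
  | _ => True

/-- The set of proper subformulas of `φ`. -/
def properSubf (φ : LTL Ap) : Set (LTL Ap) := {ψ | ψ ∈ subf φ ∧ isProper ψ}

/-- Formulas whose root is a least-fixed-point operator (`F`, `U`, `M`). -/
def isMu : LTL Ap → Prop
  | .fut _ => True
  | .untl _ _ => True
  | .strongRel _ _ => True
  | _ => False

/-- Formulas whose root is a greatest-fixed-point operator (`G`, `W`, `R`). -/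
def isNu : LTL Ap → Prop
  | .glob _ => True
  | .wUntl _ _ => True
  | .rel _ _ => True
  | _ => False

/-- `μ(φ)`: subformulas of `φ` of the form `Fψ`, `ψ₁Uψ₂`, `ψ₁Mψ₂`. -/
def muSet (φ : LTL Ap) : Set (LTL Ap) := {ψ | ψ ∈ subf φ ∧ isMu ψ}

/-- `ν(φ)`: subformulas of `φ` of the form `Gψ`, `ψ₁Wψ₂`, `ψ₁Rψ₂`. -/
def nuSet (φ : LTL Ap) : Set (LTL Ap) := {ψ | ψ ∈ subf φ ∧ isNu ψ}

/-- `GF_w = {ψ ∈ μ(φ) | w ⊨ GFψ}`. -/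
def GFSet (φ : LTL Ap) (w : ℕ → Finset Ap) : Set (LTL Ap) :=
  {ψ | ψ ∈ muSet φ ∧ Sat w (.glob (.fut ψ))}

/-- `F_w = {ψ ∈ μ(φ) | w ⊨ Fψ}`. -/
def FSet (φ : LTL Ap) (w : ℕ → Finset Ap) : Set (LTL Ap) :=
  {ψ | ψ ∈ muSet φ ∧ Sat w (.fut ψ)}

/-- `FG_w = {ψ ∈ ν(φ) | w ⊨ FGψ}`. -/
def FGSet (φ : LTL Ap) (w : ℕ → Finset Ap) : Set (LTL Ap) :=
  {ψ | ψ ∈ nuSet φ ∧ Sat w (.fut (.glob ψ))}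

/-- `G_w = {ψ ∈ ν(φ) | w ⊨ Gψ}`. -/
def GSet (φ : LTL Ap) (w : ℕ → Finset Ap) : Set (LTL Ap) :=
  {ψ | ψ ∈ nuSet φ ∧ Sat w (.glob ψ)}

open scoped Classical in
/-- `φ[X]_ν`. -/
noncomputable def evalNu (X : Set (LTL Ap)) : LTL Ap → LTL Ap
  | .tt => .tt
  | .ff => .ff
  | .atom a => .atom a
  | .natom a => .natom a
  | .conj φ ψ => .conj (evalNu X φ) (evalNu X ψ)
  | .disj φ ψ => .disj (evalNu X φ) (evalNu X ψ)
  | .next φ => .next (evalNu X φ)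
  | .glob φ => .glob (evalNu X φ)
  | .wUntl φ ψ => .wUntl (evalNu X φ) (evalNu X ψ)
  | .rel φ ψ => .rel (evalNu X φ) (evalNu X ψ)
  | .fut φ => if LTL.fut φ ∈ X then .tt else .ff
  | .untl φ ψ => if LTL.untl φ ψ ∈ X then .wUntl (evalNu X φ) (evalNu X ψ) else .ff
  | .strongRel φ ψ => if LTL.strongRel φ ψ ∈ X then .rel (evalNu X φ) (evalNu X ψ) else .ff

open scoped Classical in
/-- `φ[Y]_μ`. -/
noncomputable def evalMu (Y : Set (LTL Ap)) : LTL Ap → LTL Ap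
  | .tt => .tt
  | .ff => .ff
  | .atom a => .atom a
  | .natom a => .natom a
  | .conj φ ψ => .conj (evalMu Y φ) (evalMu Y ψ)
  | .disj φ ψ => .disj (evalMu Y φ) (evalMu Y ψ)
  | .next φ => .next (evalMu Y φ)
  | .fut φ => .fut (evalMu Y φ)
  | .untl φ ψ => .untl (evalMu Y φ) (evalMu Y ψ)
  | .strongRel φ ψ => .strongRel (evalMu Y φ) (evalMu Y ψ)
  | .glob φ => if LTL.glob φ ∈ Y then .tt else .ff
  | .wUntl φ ψ => if LTL.wUntl φ ψ ∈ Y then .tt else .untl (evalMu Y φ) (evalMu Y ψ)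
  | .rel φ ψ => if LTL.rel φ ψ ∈ Y then .tt else .strongRel (evalMu Y φ) (evalMu Y ψ)

/-- Concatenation `u·w` of a finite word and an infinite word. -/
def wordAppend (u : List (Finset Ap)) (w : ℕ → Finset Ap) : ℕ → Finset Ap :=
  fun i => if h : i < u.length then u.get ⟨i, h⟩ else w (i - u.length)

/-- The smallest set of formulas containing `tt`, `ff` and all elements of `S`
that is closed under conjunction and disjunction. -/
inductive PosBool (S : Set (LTL Ap)) : LTL Ap → Prop
  | tt : PosBool S .tt
  | ff : PosBool S .ff
  | base {ψ : LTL Ap} : ψ ∈ S → PosBool S ψ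
  | conj {φ ψ : LTL Ap} : PosBool S φ → PosBool S ψ → PosBool S (.conj φ ψ)
  | disj {φ ψ : LTL Ap} : PosBool S φ → PosBool S ψ → PosBool S (.disj φ ψ)

/-- `Reach(φ)`: the set of `≡_P`-equivalence classes of the formulas `af(φ,u)`
over all finite words `u`. -/
def Reach (φ : LTL Ap) : Set (Set (LTL Ap)) :=
  {C | ∃ u : List (Finset Ap), C = {ψ | propEquiv ψ (af φ u)}}

/-- The fragment `μLTL`: only `tt`, `ff`, literals, `∧`, `∨`, `X`, `F`, `U`, `M`. -/
def inMuLTL : LTL Ap → Prop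
  | .tt => True
  | .ff => True
  | .atom _ => True
  | .natom _ => True
  | .conj φ ψ => inMuLTL φ ∧ inMuLTL ψ
  | .disj φ ψ => inMuLTL φ ∧ inMuLTL ψ
  | .next φ => inMuLTL φ
  | .fut φ => inMuLTL φ
  | .untl φ ψ => inMuLTL φ ∧ inMuLTL ψ
  | .strongRel φ ψ => inMuLTL φ ∧ inMuLTL ψ
  | .glob _ => False
  | .wUntl _ _ => False
  | .rel _ _ => False

/-- The fragment `νLTL`: only `tt`, `ff`, literals, `∧`, `∨`, `X`, `G`, `W`, `R`. -/
def inNuLTL : LTL Ap → Prop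
  | .tt => True
  | .ff => True
  | .atom _ => True
  | .natom _ => True
  | .conj φ ψ => inNuLTL φ ∧ inNuLTL ψ
  | .disj φ ψ => inNuLTL φ ∧ inNuLTL ψ
  | .next φ => inNuLTL φ
  | .glob φ => inNuLTL φ
  | .wUntl φ ψ => inNuLTL φ ∧ inNuLTL ψ
  | .rel φ ψ => inNuLTL φ ∧ inNuLTL ψ
  | .fut _ => False
  | .untl _ _ => False
  | .strongRel _ _ => False


/- ===== Auxiliary lemmas ===== -/

lemma suffix_suffix (w : ℕ → Finset Ap) (i j : ℕ) :
    suffix (suffix w i) j = suffix w (i + j) :=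
  funext fun k => by simp [suffix, Nat.add_assoc]

lemma suffix_zero (w : ℕ → Finset Ap) : suffix w 0 = w :=
  funext fun k => by simp [suffix]

lemma sat_propEval (w : ℕ → Finset Ap) : ∀ ψ : LTL Ap, propEval (Sat w) ψ ↔ Sat w ψ := by
  intro ψ; induction ψ <;> simp_all [propEval, Sat]

lemma equivtt_sat {ψ : LTL Ap} (h : propEquiv ψ .tt) (w : ℕ → Finset Ap) : Sat w ψ := by
  have := (h (Sat w)).2
  simp [propEval] at this
  exact (sat_propEval w ψ).1 this

lemma equivtt_iff {ψ : LTL Ap} : propEquiv ψ .tt ↔ ∀ v, propEval v ψ := by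
  constructor
  · intro h v; exact (h v).2 (by simp [propEval])
  · intro h v; simp [propEval, h v]

lemma af_conj : ∀ (u : List (Finset Ap)) (φ ψ : LTL Ap),
    af (.conj φ ψ) u = .conj (af φ u) (af ψ u)
  | [], _, _ => rfl
  | ν :: u, φ, ψ => af_conj u _ _

lemma af_disj : ∀ (u : List (Finset Ap)) (φ ψ : LTL Ap),
    af (.disj φ ψ) u = .disj (af φ u) (af ψ u)
  | [], _, _ => rfl
  | ν :: u, φ, ψ => af_disj u _ _

lemma af_tt : ∀ u : List (Finset Ap), af (.tt : LTL Ap) u = .tt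
  | [] => rfl
  | ν :: u => af_tt u

lemma af_cons (ψ : LTL Ap) (ν : Finset Ap) (u : List (Finset Ap)) :
    af ψ (ν :: u) = af (afLetter ψ ν) u := rfl

lemma af_append (ψ : LTL Ap) : ∀ (u v : List (Finset Ap)), af ψ (u ++ v) = af (af ψ u) v := by
  intro u
  induction u generalizing ψ with
  | nil => intro v; rfl
  | cons ν u ih => intro v; exact ih (afLetter ψ ν) v

lemma af_fut_cons (ψ : LTL Ap) (ν : Finset Ap) (u : List (Finset Ap)) :
    af (.fut ψ) (ν :: u) = .disj (af ψ (ν :: u)) (af (.fut ψ) u) := by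
  show af (.disj (afLetter ψ ν) (.fut ψ)) u = _
  rw [af_disj]; rfl

lemma af_untl_cons (ξ χ : LTL Ap) (ν : Finset Ap) (u : List (Finset Ap)) :
    af (.untl ξ χ) (ν :: u) =
      .disj (af χ (ν :: u)) (.conj (af ξ (ν :: u)) (af (.untl ξ χ) u)) := by
  show af (.disj (afLetter χ ν) (.conj (afLetter ξ ν) (.untl ξ χ))) u = _
  rw [af_disj, af_conj]; rfl

lemma af_strongRel_cons (ξ χ : LTL Ap) (ν : Finset Ap) (u : List (Finset Ap)) :
    af (.strongRel ξ χ) (ν :: u) =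
      .conj (af χ (ν :: u)) (.disj (af ξ (ν :: u)) (af (.strongRel ξ χ) u)) := by
  show af (.conj (afLetter χ ν) (.disj (afLetter ξ ν) (.strongRel ξ χ))) u = _
  rw [af_conj, af_disj]; rfl

lemma propEval_afLetter (v : LTL Ap → Prop) (ν : Finset Ap) :
    ∀ ψ : LTL Ap, propEval v (afLetter ψ ν) ↔
      propEval (fun χ => propEval v (afLetter χ ν)) ψ := by
  intro ψ
  induction ψ <;> simp_all [propEval, afLetter]

lemma equivtt_afLetter {ψ : LTL Ap} (h : propEquiv ψ .tt) (ν : Finset Ap) :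
    propEquiv (afLetter ψ ν) .tt := by
  rw [equivtt_iff] at h ⊢
  intro v
  exact (propEval_afLetter v ν ψ).2 (h _)

lemma equivtt_af {ψ : LTL Ap} (h : propEquiv ψ .tt) :
    ∀ u : List (Finset Ap), propEquiv (af ψ u) .tt := by
  intro u
  induction u generalizing ψ with
  | nil => exact h
  | cons ν u ih => exact ih (equivtt_afLetter h ν)

lemma equivtt_conj {a b : LTL Ap} (ha : propEquiv a .tt) (hb : propEquiv b .tt) :
    propEquiv (.conj a b) .tt := by
  rw [equivtt_iff] at *
  intro v; exact ⟨ha v, hb v⟩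

lemma equivtt_disj_l {a : LTL Ap} (b : LTL Ap) (ha : propEquiv a .tt) :
    propEquiv (.disj a b) .tt := by
  rw [equivtt_iff] at *
  intro v; exact Or.inl (ha v)

lemma equivtt_disj_r (a : LTL Ap) {b : LTL Ap} (hb : propEquiv b .tt) :
    propEquiv (.disj a b) .tt := by
  rw [equivtt_iff] at *
  intro v; exact Or.inr (hb v)

lemma equivtt_tt : propEquiv (.tt : LTL Ap) .tt := fun _ => Iff.rfl

lemma afLetter_inMuLTL {ψ : LTL Ap} (h : inMuLTL ψ) (ν : Finset Ap) :
    inMuLTL (afLetter ψ ν) := by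
  induction ψ <;> simp_all [inMuLTL, afLetter] <;> split <;> simp [inMuLTL]
lemma sat_step : ∀ (ψ : LTL Ap), inMuLTL ψ → ∀ (w : ℕ → Finset Ap),
    Sat w ψ ↔ Sat (suffix w 1) (afLetter ψ (w 0)) := by
  intro ψ
  induction ψ with
  | tt => intro _ w; simp [Sat, afLetter]
  | ff => intro _ w; simp [Sat, afLetter]
  | atom a => intro _ w; by_cases h : a ∈ w 0 <;> simp [Sat, afLetter, h]
  | natom a => intro _ w; by_cases h : a ∈ w 0 <;> simp [Sat, afLetter, h]
  | conj ξ χ ih1 ih2 =>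
      intro h w
      exact and_congr (ih1 h.1 w) (ih2 h.2 w)
  | disj ξ χ ih1 ih2 =>
      intro h w
      exact or_congr (ih1 h.1 w) (ih2 h.2 w)
  | next ξ _ => intro _ w; exact Iff.rfl
  | fut ξ ih =>
      intro h w
      show (∃ k, Sat (suffix w k) ξ) ↔
        Sat (suffix w 1) (afLetter ξ (w 0)) ∨ ∃ k, Sat (suffix (suffix w 1) k) ξ
      constructor
      · rintro ⟨k, hk⟩
        match k with
        | 0 => exact Or.inl ((ih h _).1 (by rwa [suffix_zero] at hk))
        | k + 1 => exact Or.inr ⟨k, by rwa [suffix_suffix, Nat.add_comm]⟩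
      · rintro (hk | ⟨k, hk⟩)
        · exact ⟨0, by rw [suffix_zero]; exact (ih h w).2 hk⟩
        · exact ⟨k + 1, by rwa [suffix_suffix, Nat.add_comm] at hk⟩
  | untl ξ χ ih1 ih2 =>
      intro h w
      show (∃ k, Sat (suffix w k) χ ∧ ∀ j < k, Sat (suffix w j) ξ) ↔
        Sat (suffix w 1) (afLetter χ (w 0)) ∨
          (Sat (suffix w 1) (afLetter ξ (w 0)) ∧
            ∃ k, Sat (suffix (suffix w 1) k) χ ∧ ∀ j < k, Sat (suffix (suffix w 1) j) ξ)
      simp only [suffix_suffix]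
      constructor
      · rintro ⟨k, hk, hj⟩
        match k with
        | 0 => exact Or.inl ((ih2 h.2 _).1 (by rwa [suffix_zero] at hk))
        | k + 1 =>
            refine Or.inr ⟨(ih1 h.1 _).1 (by have := hj 0 (Nat.succ_pos _); rwa [suffix_zero] at this),
              k, by rwa [Nat.add_comm], ?_⟩
            intro j hjk
            rw [Nat.add_comm]
            exact hj (j + 1) (by omega)
      · rintro (hk | ⟨h0, k, hk, hj⟩)
        · exact ⟨0, by rw [suffix_zero]; exact (ih2 h.2 w).2 hk, fun j hj => by omega⟩
        · refine ⟨k + 1, by rwa [Nat.add_comm 1 k] at hk, ?_⟩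
          intro j hjk
          match j with
          | 0 => rw [suffix_zero]; exact (ih1 h.1 w).2 h0
          | j + 1 => rw [Nat.add_comm]; exact hj j (by omega)
  | strongRel ξ χ ih1 ih2 =>
      intro h w
      show (∃ k, Sat (suffix w k) ξ ∧ ∀ j ≤ k, Sat (suffix w j) χ) ↔
        Sat (suffix w 1) (afLetter χ (w 0)) ∧
          (Sat (suffix w 1) (afLetter ξ (w 0)) ∨
            ∃ k, Sat (suffix (suffix w 1) k) ξ ∧ ∀ j ≤ k, Sat (suffix (suffix w 1) j) χ)
      simp only [suffix_suffix]
      constructor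
      · rintro ⟨k, hk, hj⟩
        refine ⟨(ih2 h.2 _).1 (by have := hj 0 (Nat.zero_le _); rwa [suffix_zero] at this), ?_⟩
        match k with
        | 0 => exact Or.inl ((ih1 h.1 _).1 (by rwa [suffix_zero] at hk))
        | k + 1 =>
            refine Or.inr ⟨k, by rwa [Nat.add_comm], ?_⟩
            intro j hjk
            rw [Nat.add_comm]
            exact hj (j + 1) (by omega)
      · rintro ⟨h0, hk | ⟨k, hk, hj⟩⟩
        · exact ⟨0, by rw [suffix_zero]; exact (ih1 h.1 w).2 hk,
            fun j hj => by
              match j with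
              | 0 => rw [suffix_zero]; exact (ih2 h.2 w).2 h0⟩
        · refine ⟨k + 1, by rwa [Nat.add_comm 1 k] at hk, ?_⟩
          intro j hjk
          match j with
          | 0 => rw [suffix_zero]; exact (ih2 h.2 w).2 h0
          | j + 1 => rw [Nat.add_comm]; exact hj j (by omega)
  | glob ξ _ => intro h; exact absurd h (by simp [inMuLTL])
  | wUntl ξ χ _ _ => intro h; exact absurd h (by simp [inMuLTL])
  | rel ξ χ _ _ => intro h; exact absurd h (by simp [inMuLTL])
lemma prefixWord_succ (w : ℕ → Finset Ap) (n : ℕ) :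
    prefixWord w (n + 1) = w 0 :: prefixWord (suffix w 1) n := by
  simp [prefixWord, List.range_succ_eq_map, List.map_map, Function.comp, suffix,
    Nat.add_comm]

lemma sat_af_iff : ∀ (n : ℕ) (ψ : LTL Ap), inMuLTL ψ → ∀ (w : ℕ → Finset Ap),
    Sat w ψ ↔ Sat (suffix w n) (af ψ (prefixWord w n)) := by
  intro n
  induction n with
  | zero => intro ψ _ w; rw [suffix_zero]; rfl
  | succ n ih =>
      intro ψ h w
      rw [sat_step ψ h w, ih (afLetter ψ (w 0)) (afLetter_inMuLTL h _) (suffix w 1),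
        suffix_suffix, prefixWord_succ]
      rw [Nat.add_comm]
      rfl

lemma infix_eq_prefix (w : ℕ → Finset Ap) (i j : ℕ) :
    infixWord w i j = prefixWord (suffix w i) (j - i) := rfl

lemma sat_af_infix {ψ : LTL Ap} (h : inMuLTL ψ) (w : ℕ → Finset Ap) {i j : ℕ} (hij : i ≤ j) :
    Sat (suffix w i) ψ ↔ Sat (suffix w j) (af ψ (infixWord w i j)) := by
  rw [infix_eq_prefix, sat_af_iff (j - i) ψ h (suffix w i), suffix_suffix]
  have : i + (j - i) = j := by omega
  rw [this]

lemma infix_cons {w : ℕ → Finset Ap} {i j : ℕ} (h : i < j) :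
    infixWord w i j = w i :: infixWord w (i + 1) j := by
  obtain ⟨m, hm⟩ : ∃ m, j - i = m + 1 := ⟨j - i - 1, by omega⟩
  have hm' : j - (i + 1) = m := by omega
  have hfun : ((fun k => w (i + k)) ∘ Nat.succ) = fun k => w (i + 1 + k) :=
    funext fun k => congrArg w (by omega)
  simp only [infixWord, hm, hm', List.range_succ_eq_map, List.map_cons, List.map_map, hfun,
    Nat.add_zero]

lemma infix_append {w : ℕ → Finset Ap} {i j k : ℕ} (hij : i ≤ j) (hjk : j ≤ k) :
    infixWord w i j ++ infixWord w j k = infixWord w i k := by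
  have h1 : k - i = (j - i) + (k - j) := by omega
  have hfun : ((fun k => w (i + k)) ∘ (fun l => (j - i) + l)) = fun l => w (j + l) :=
    funext fun l => by
      show w (i + ((j - i) + l)) = w (j + l)
      congr 1
      omega
  simp only [infixWord, h1, List.range_add, List.map_append, List.map_map, hfun]

lemma equivtt_af_extend {ψ : LTL Ap} {w : ℕ → Finset Ap} {i j k : ℕ} (hij : i ≤ j)
    (hjk : j ≤ k) (h : propEquiv (af ψ (infixWord w i j)) .tt) :
    propEquiv (af ψ (infixWord w i k)) .tt := by
  rw [← infix_append hij hjk, af_append]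
  exact equivtt_af h _
lemma fut_gen {ψ : LTL Ap} (w : ℕ → Finset Ap) :
    ∀ (n t j m : ℕ), j + n = t → t < m →
      propEquiv (af ψ (infixWord w t m)) .tt →
      propEquiv (af (.fut ψ) (infixWord w j m)) .tt := by
  intro n
  induction n with
  | zero =>
      intro t j m hjt htm h
      have hj : j = t := by omega
      subst hj
      rw [infix_cons htm, af_fut_cons, ← infix_cons htm]
      exact equivtt_disj_l _ h
  | succ n ih =>
      intro t j m hjt htm h
      have hj : j < m := by omega
      rw [infix_cons hj, af_fut_cons]
      exact equivtt_disj_r _ (ih t (j + 1) m (by omega) htm h)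

lemma untl_gen {ξ χ : LTL Ap} (w : ℕ → Finset Ap) :
    ∀ (n t j m : ℕ), j + n = t → t < m →
      propEquiv (af χ (infixWord w t m)) .tt →
      (∀ l, j ≤ l → l < t → propEquiv (af ξ (infixWord w l m)) .tt) →
      propEquiv (af (.untl ξ χ) (infixWord w j m)) .tt := by
  intro n
  induction n with
  | zero =>
      intro t j m hjt htm h hl
      have hj : j = t := by omega
      subst hj
      rw [infix_cons htm, af_untl_cons, ← infix_cons htm]
      exact equivtt_disj_l _ h
  | succ n ih =>
      intro t j m hjt htm h hl
      have hj : j < m := by omega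
      rw [infix_cons hj, af_untl_cons, ← infix_cons hj]
      refine equivtt_disj_r _ (equivtt_conj (hl j le_rfl (by omega)) ?_)
      exact ih t (j + 1) m (by omega) htm h (fun l h1 h2 => hl l (by omega) h2)

lemma strongRel_gen {ξ χ : LTL Ap} (w : ℕ → Finset Ap) :
    ∀ (n t j m : ℕ), j + n = t → t < m →
      propEquiv (af ξ (infixWord w t m)) .tt →
      (∀ l, j ≤ l → l ≤ t → propEquiv (af χ (infixWord w l m)) .tt) →
      propEquiv (af (.strongRel ξ χ) (infixWord w j m)) .tt := by
  intro n
  induction n with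
  | zero =>
      intro t j m hjt htm h hl
      have hj : j = t := by omega
      subst hj
      rw [infix_cons htm, af_strongRel_cons, ← infix_cons htm]
      exact equivtt_conj (hl j le_rfl le_rfl) (equivtt_disj_l _ h)
  | succ n ih =>
      intro t j m hjt htm h hl
      have hj : j < m := by omega
      rw [infix_cons hj, af_strongRel_cons, ← infix_cons hj]
      refine equivtt_conj (hl j le_rfl (by omega)) (equivtt_disj_r _ ?_)
      exact ih t (j + 1) m (by omega) htm h (fun l h1 h2 => hl l (by omega) h2)

lemma main_fwd : ∀ (ψ : LTL Ap), inMuLTL ψ → ∀ (w : ℕ → Finset Ap) (i : ℕ),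
    Sat (suffix w i) ψ →
    ∃ m, i ≤ m ∧ ∀ m', m ≤ m' → propEquiv (af ψ (infixWord w i m')) .tt := by
  intro ψ
  induction ψ with
  | tt =>
      intro _ w i _
      exact ⟨i, le_rfl, fun m' _ => by rw [af_tt]; exact equivtt_tt⟩
  | ff => intro _ w i hs; exact absurd hs (by simp [Sat])
  | atom a =>
      intro _ w i hs
      have ha : a ∈ w i := by simpa [Sat, suffix] using hs
      refine ⟨i + 1, by omega, fun m' hm' => ?_⟩
      rw [infix_cons (show i < m' by omega), af_cons]
      simp only [afLetter, if_pos ha, af_tt]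
      exact equivtt_tt
  | natom a =>
      intro _ w i hs
      have ha : a ∉ w i := by simpa [Sat, suffix] using hs
      refine ⟨i + 1, by omega, fun m' hm' => ?_⟩
      rw [infix_cons (show i < m' by omega), af_cons]
      simp only [afLetter, if_neg ha, af_tt]
      exact equivtt_tt
  | conj ξ χ ih1 ih2 =>
      intro h w i hs
      obtain ⟨m1, hm1, h1⟩ := ih1 h.1 w i hs.1
      obtain ⟨m2, hm2, h2⟩ := ih2 h.2 w i hs.2
      refine ⟨max m1 m2, le_trans hm1 (le_max_left _ _), fun m' hm' => ?_⟩
      have hc1 : m1 ≤ max m1 m2 := le_max_left _ _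
      have hc2 : m2 ≤ max m1 m2 := le_max_right _ _
      rw [af_conj]
      exact equivtt_conj (h1 m' (by omega)) (h2 m' (by omega))
  | disj ξ χ ih1 ih2 =>
      intro h w i hs
      rcases hs with hs | hs
      · obtain ⟨m1, hm1, h1⟩ := ih1 h.1 w i hs
        exact ⟨m1, hm1, fun m' hm' => by
          rw [af_disj]; exact equivtt_disj_l _ (h1 m' hm')⟩
      · obtain ⟨m2, hm2, h2⟩ := ih2 h.2 w i hs
        exact ⟨m2, hm2, fun m' hm' => by
          rw [af_disj]; exact equivtt_disj_r _ (h2 m' hm')⟩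
  | next ξ ih =>
      intro h w i hs
      have hs' : Sat (suffix w (i + 1)) ξ := by
        have : Sat (suffix (suffix w i) 1) ξ := hs
        rwa [suffix_suffix] at this
      obtain ⟨m, hm, h1⟩ := ih h w (i + 1) hs'
      refine ⟨m, by omega, fun m' hm' => ?_⟩
      rw [infix_cons (show i < m' by omega), af_cons]
      exact h1 m' hm'
  | fut ξ ih =>
      intro h w i hs
      obtain ⟨k, hk⟩ := hs
      have hk' : Sat (suffix w (i + k)) ξ := by rwa [suffix_suffix] at hk
      obtain ⟨m, hm, h1⟩ := ih h w (i + k) hk'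
      refine ⟨m + 1, by omega, fun m' hm' => ?_⟩
      exact fut_gen w k (i + k) i m' rfl (by omega) (h1 m' (by omega))
  | untl ξ χ ih1 ih2 =>
      intro h w i hs
      obtain ⟨k, hk, hl⟩ := hs
      have hk' : Sat (suffix w (i + k)) χ := by rwa [suffix_suffix] at hk
      obtain ⟨m2, hm2, h2⟩ := ih2 h.2 w (i + k) hk'
      have hch : ∀ l, ∃ m, l < k →
          ∀ m', m ≤ m' → propEquiv (af ξ (infixWord w (i + l) m')) .tt := by
        intro l
        by_cases hc : l < k
        · have hsl : Sat (suffix w (i + l)) ξ := by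
            have := hl l hc
            rwa [suffix_suffix] at this
          obtain ⟨m, _, h1⟩ := ih1 h.1 w (i + l) hsl
          exact ⟨m, fun _ => h1⟩
        · exact ⟨0, fun hlt => absurd hlt hc⟩
      choose f hf using hch
      have hc1 : m2 ≤ max m2 ((Finset.range k).sup f) := le_max_left _ _
      refine ⟨max m2 ((Finset.range k).sup f) + 1, by omega, fun m' hm' => ?_⟩
      apply untl_gen w k (i + k) i m' rfl (by omega) (h2 m' (by omega))
      intro l hl1 hl2
      have hlk : l - i < k := by omega
      have hfl : f (l - i) ≤ m' := by
        have h3 : f (l - i) ≤ (Finset.range k).sup f := Finset.le_sup (Finset.mem_range.2 hlk)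
        have h4 : (Finset.range k).sup f ≤ max m2 ((Finset.range k).sup f) := le_max_right _ _
        omega
      have := hf (l - i) hlk m' hfl
      rwa [show i + (l - i) = l by omega] at this
  | strongRel ξ χ ih1 ih2 =>
      intro h w i hs
      obtain ⟨k, hk, hl⟩ := hs
      have hk' : Sat (suffix w (i + k)) ξ := by rwa [suffix_suffix] at hk
      obtain ⟨m1, hm1, h1⟩ := ih1 h.1 w (i + k) hk'
      have hch : ∀ l, ∃ m, l ≤ k →
          ∀ m', m ≤ m' → propEquiv (af χ (infixWord w (i + l) m')) .tt := by
        intro l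
        by_cases hc : l ≤ k
        · have hsl : Sat (suffix w (i + l)) χ := by
            have := hl l hc
            rwa [suffix_suffix] at this
          obtain ⟨m, _, h2⟩ := ih2 h.2 w (i + l) hsl
          exact ⟨m, fun _ => h2⟩
        · exact ⟨0, fun hlt => absurd hlt hc⟩
      choose f hf using hch
      have hc1 : m1 ≤ max m1 ((Finset.range (k + 1)).sup f) := le_max_left _ _
      refine ⟨max m1 ((Finset.range (k + 1)).sup f) + 1, by omega, fun m' hm' => ?_⟩
      apply strongRel_gen w k (i + k) i m' rfl (by omega) (h1 m' (by omega))
      intro l hl1 hl2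
      have hlk : l - i ≤ k := by omega
      have hfl : f (l - i) ≤ m' := by
        have h3 : f (l - i) ≤ (Finset.range (k + 1)).sup f :=
          Finset.le_sup (Finset.mem_range.2 (by omega))
        have h4 : (Finset.range (k + 1)).sup f ≤ max m1 ((Finset.range (k + 1)).sup f) :=
          le_max_right _ _
        omega
      have := hf (l - i) hlk m' hfl
      rwa [show i + (l - i) = l by omega] at this
  | glob ξ _ => intro h; exact absurd h (by simp [inMuLTL])
  | wUntl ξ χ _ _ => intro h; exact absurd h (by simp [inMuLTL])
  | rel ξ χ _ _ => intro h; exact absurd h (by simp [inMuLTL])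

/-- for `φ ∈ μLTL`, `w ⊨ GFφ` iff for every `i` there is `j ≥ i`
with `af(Fφ, w_{ij}) ≡_P tt`. -/
theorem stmt4 {Ap : Type} [DecidableEq Ap] [Fintype Ap]
    (φ : LTL Ap) (hφ : inMuLTL φ) (w : ℕ → Finset Ap) :
    Sat w (LTL.glob (LTL.fut φ)) ↔
      ∀ i : ℕ, ∃ j : ℕ, i ≤ j ∧ propEquiv (af (LTL.fut φ) (infixWord w i j)) LTL.tt := by
  constructor
  · intro hs i
    have hsi : Sat (suffix w i) (LTL.fut φ) := hs i
    obtain ⟨m, hm, h1⟩ := main_fwd (.fut φ) hφ w i hsi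
    exact ⟨m, hm, h1 m le_rfl⟩
  · intro h
    intro i
    obtain ⟨j, hj, he⟩ := h i
    exact (sat_af_infix (show inMuLTL (LTL.fut φ) from hφ) w hj).2 (equivtt_sat he (suffix w j))
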